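/- Let k ≥ 2, ε_r > 0, let P_X be a distribution on {1,…,k} with p_i = P_X(i) > 0 and p_1 ≤ … ≤ p_k, and let P_{Y|X} be the k-randomized response mechanism with α = e^{ε_r}/(e^{ε_r}+k−1), β = 1/(e^{ε_r}+k−1), and q_j = β + (α−β)p_j. Then for every δ ∈ (q_1, 1), the PML envelope satisfies ε_c(δ) ≤ min{ log(kα/δ), log(α/q_1) }. -/

import Mathlib

open Real Finset
open scoped Classical

noncomputable section

/-- Marginal distribution of the first coordinate of a joint distribution. -/
def margX {X Y : Type} [Fintype Y] (P : X → Y → ℝ) (x : X) : ℝ := ∑ y, P x y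

/-- Marginal distribution of the second coordinate of a joint distribution. -/
def margY {X Y : Type} [Fintype X] (P : X → Y → ℝ) (y : Y) : ℝ := ∑ x, P x y

/-- `P` is a joint probability distribution on `X × Y`. -/
def IsJoint {X Y : Type} [Fintype X] [Fintype Y] (P : X → Y → ℝ) : Prop :=
  (∀ x y, 0 ≤ P x y) ∧ (∑ x, ∑ y, P x y) = 1

/-- Conditional probability `P_{Y|X=x}(y)` of the second coordinate given the first. -/
def condYX {X Y : Type} [Fintype Y] (P : X → Y → ℝ) (x : X) (y : Y) : ℝ :=
  P x y / margX P x

/-- Pointwise maximal leakage of the outcome `y`: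
`ℓ(X → y) = log (max_x P_{Y|X=x}(y) / P_Y(y))`. -/
def pml {X Y : Type} [Fintype X] [Fintype Y] (P : X → Y → ℝ) (y : Y) : ℝ :=
  Real.log ((⨆ x, condYX P x y) / margY P y)

/-- `K` is a Markov kernel (a conditional distribution). -/
def IsKernel {Y Z : Type} [Fintype Z] (K : Y → Z → ℝ) : Prop :=
  (∀ y z, 0 ≤ K y z) ∧ ∀ y, (∑ z, K y z) = 1

/-- Joint distribution of `(X, Z)` obtained by post-processing `Y` with the kernel `K`
(marginalizing out `Y`); this encodes the Markov chain `X - Y - Z`. -/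
def pushKernel {X Y Z : Type} [Fintype Y] (P : X → Y → ℝ) (K : Y → Z → ℝ)
    (x : X) (z : Z) : ℝ :=
  ∑ y, P x y * K y z

/-- Left-continuous quantile of the leakage random variable:
`ubar ε_Z(δ) = inf {t ≥ 0 : ℙ(ℓ(Z) ≤ t) ≥ 1 - δ}`. -/
def ubarEps {X Z : Type} [Fintype X] [Fintype Z] (Q : X → Z → ℝ) (δ : ℝ) : ℝ :=
  sInf {t : ℝ | 0 ≤ t ∧
    1 - δ ≤ ∑ z ∈ Finset.univ.filter (fun z => pml Q z ≤ t), margY Q z}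

/-- The PML envelope: the supremum of the left-continuous leakage quantile over all
finite post-processings `Z` of `Y` (i.e., over all Markov chains `X - Y - Z`). -/
def pmlEnvelope {X Y : Type} [Fintype X] [Fintype Y] (P : X → Y → ℝ) (δ : ℝ) : ℝ :=
  sSup {e : ℝ | ∃ (n : ℕ) (K : Y → Fin n → ℝ),
    IsKernel K ∧ e = ubarEps (pushKernel P K) δ}

/-! Both bounds survive post-processing `X - Y - Z`, where
`P_{Z|X=x}(z) = ∑_y P_{Y|X=x}(y) K(y,z)`. The maximal leakage `∑_z max_x P_{Z|X=x}(z)` is at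
most that of `Y`, which is `kα` for randomized response; Markov's inequality applied to
`exp ℓ(X → Z)` then puts mass at most `δ` above `log (kα / δ)`. Likewise,
`max_x P_{Z|X=x}(z) ≤ c P_Z(z)` for every `z` as soon as `max_x P_{Y|X=x}(y) ≤ c P_Y(y)` for
every `y`; for randomized response this holds with `c = α / q₁`, since `max_x P_{Y|X=x}(y) = α`
and `P_Y(y) = q_y ≥ q₁`. -/

section PostProcessing

variable {X Y Z : Type}

lemma condYX_nonneg [Fintype Y] {P : X → Y → ℝ} (hP : ∀ x y, 0 ≤ P x y) (x : X) (y : Y) :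
    0 ≤ condYX P x y :=
  div_nonneg (hP x y) (sum_nonneg fun y _ => hP x y)

lemma margY_nonneg [Fintype X] {P : X → Y → ℝ} (hP : ∀ x y, 0 ≤ P x y) (y : Y) :
    0 ≤ margY P y :=
  sum_nonneg fun x _ => hP x y

lemma IsJoint.sum_margY [Fintype X] [Fintype Y] {P : X → Y → ℝ} (hP : IsJoint P) :
    ∑ y, margY P y = 1 := by
  rw [← hP.2]
  exact sum_comm

lemma pushKernel_nonneg [Fintype Y] [Fintype Z] {P : X → Y → ℝ} {K : Y → Z → ℝ}
    (hP : ∀ x y, 0 ≤ P x y) (hK : IsKernel K) (x : X) (z : Z) : 0 ≤ pushKernel P K x z :=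
  sum_nonneg fun y _ => mul_nonneg (hP x y) (hK.1 y z)

lemma margX_pushKernel [Fintype Y] [Fintype Z] {K : Y → Z → ℝ} (hK : IsKernel K)
    (P : X → Y → ℝ) (x : X) :
    margX (pushKernel P K) x = margX P x := by
  simp only [margX, pushKernel]
  rw [sum_comm]
  simp only [← mul_sum, hK.2, mul_one]

lemma margY_pushKernel [Fintype X] [Fintype Y] (P : X → Y → ℝ) (K : Y → Z → ℝ) (z : Z) :
    margY (pushKernel P K) z = ∑ y, margY P y * K y z := by
  simp only [margY, pushKernel, sum_mul]
  exact sum_comm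

lemma sum_margY_pushKernel [Fintype X] [Fintype Y] [Fintype Z] {K : Y → Z → ℝ}
    (hK : IsKernel K) (P : X → Y → ℝ) :
    ∑ z, margY (pushKernel P K) z = ∑ y, margY P y := by
  simp only [margY_pushKernel]
  rw [sum_comm]
  simp only [← mul_sum, hK.2, mul_one]

lemma condYX_pushKernel [Fintype Y] [Fintype Z] {K : Y → Z → ℝ} (hK : IsKernel K)
    (P : X → Y → ℝ) (x : X) (z : Z) :
    condYX (pushKernel P K) x z = ∑ y, condYX P x y * K y z := by
  simp only [condYX, margX_pushKernel hK, pushKernel, sum_div, div_mul_eq_mul_div]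

/-- Data processing for maximal leakage: `ℒ(X → Z) ≤ ℒ(X → Y)` whenever `X - Y - Z`. -/
lemma sum_iSup_condYX_pushKernel_le [Fintype X] [Fintype Y] [Fintype Z]
    {P : X → Y → ℝ} {K : Y → Z → ℝ}
    (hP : ∀ x y, 0 ≤ P x y) (hK : IsKernel K) :
    ∑ z, ⨆ x, condYX (pushKernel P K) x z ≤ ∑ y, ⨆ x, condYX P x y := by
  have hsup_nonneg (y : Y) : 0 ≤ ⨆ x, condYX P x y := Real.iSup_nonneg (condYX_nonneg hP · y)
  calc ∑ z, ⨆ x, condYX (pushKernel P K) x z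
      ≤ ∑ z, ∑ y, (⨆ x, condYX P x y) * K y z := by
        refine sum_le_sum fun z _ => Real.iSup_le (fun x => ?_)
          (sum_nonneg fun y _ => mul_nonneg (hsup_nonneg y) (hK.1 y z))
        rw [condYX_pushKernel hK]
        exact sum_le_sum fun y _ =>
          mul_le_mul_of_nonneg_right (le_ciSup (Finite.bddAbove_range (condYX P · y)) x)
            (hK.1 y z)
    _ = ∑ y, ⨆ x, condYX P x y := by
        rw [sum_comm]
        simp only [← mul_sum, hK.2, mul_one]

lemma iSup_condYX_pushKernel_le [Fintype X] [Fintype Y] [Fintype Z]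
    {P : X → Y → ℝ} {K : Y → Z → ℝ} {c : ℝ}
    (hP : ∀ x y, 0 ≤ P x y) (hK : IsKernel K) (hc : 0 ≤ c)
    (h : ∀ y, ⨆ x, condYX P x y ≤ c * margY P y) (z : Z) :
    ⨆ x, condYX (pushKernel P K) x z ≤ c * margY (pushKernel P K) z := by
  rw [margY_pushKernel, mul_sum]
  refine Real.iSup_le (fun x => ?_)
    (sum_nonneg fun y _ => mul_nonneg hc (mul_nonneg (margY_nonneg hP y) (hK.1 y z)))
  rw [condYX_pushKernel hK]
  refine sum_le_sum fun y _ => ?_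
  calc condYX P x y * K y z ≤ (⨆ x, condYX P x y) * K y z :=
        mul_le_mul_of_nonneg_right (le_ciSup (Finite.bddAbove_range (condYX P · y)) x)
            (hK.1 y z)
    _ ≤ c * margY P y * K y z := mul_le_mul_of_nonneg_right (h y) (hK.1 y z)
    _ = c * (margY P y * K y z) := mul_assoc _ _ _

end PostProcessing

section Quantile

variable {X Z : Type} [Fintype X] [Fintype Z] {Q : X → Z → ℝ}

lemma pml_le_log_of_iSup_le (hQ : ∀ x z, 0 ≤ Q x z) {c : ℝ} (hc : 1 ≤ c) {z : Z}
    (h : ⨆ x, condYX Q x z ≤ c * margY Q z) : pml Q z ≤ Real.log c := by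
  have hratio : (⨆ x, condYX Q x z) / margY Q z ≤ c :=
    div_le_of_le_mul₀ (margY_nonneg hQ z) (by linarith) h
  rcases (div_nonneg (Real.iSup_nonneg (condYX_nonneg hQ · z)) (margY_nonneg hQ z)).eq_or_lt
    with hzero | hpos
  · rw [pml, ← hzero, Real.log_zero]
    exact Real.log_nonneg hc
  · exact Real.log_le_log hpos hratio

lemma ubarEps_le {δ t : ℝ} (ht : 0 ≤ t)
    (h : 1 - δ ≤ ∑ z ∈ univ.filter (fun z => pml Q z ≤ t), margY Q z) :
    ubarEps Q δ ≤ t :=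
  csInf_le ⟨0, fun _ hs => hs.1⟩ ⟨ht, h⟩

lemma ubarEps_le_of_forall_pml_le (hmass : ∑ z, margY Q z = 1) {δ t : ℝ} (hδ : 0 ≤ δ)
    (ht : 0 ≤ t) (h : ∀ z, pml Q z ≤ t) : ubarEps Q δ ≤ t := by
  refine ubarEps_le ht ?_
  rw [filter_true_of_mem fun z _ => h z, hmass]
  linarith

/-- Markov's inequality: an outcome with `ℓ(X → z) > log (L / δ)` has
`P_Z(z) < (δ / L) max_x P_{Z|X=x}(z)`, so these outcomes carry mass at most `δ`. -/
lemma ubarEps_le_log_div_of_sum_iSup_le (hQ : ∀ x z, 0 ≤ Q x z)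
    (hmass : ∑ z, margY Q z = 1) {δ L : ℝ} (hδ : 0 < δ) (hδL : δ ≤ L)
    (hL : ∑ z, ⨆ x, condYX Q x z ≤ L) : ubarEps Q δ ≤ Real.log (L / δ) := by
  have hL0 : 0 < L := hδ.trans_le hδL
  have hc : 1 ≤ L / δ := (one_le_div hδ).2 hδL
  have hsup_nonneg (z : Z) : 0 ≤ ⨆ x, condYX Q x z := Real.iSup_nonneg (condYX_nonneg hQ · z)
  set t := Real.log (L / δ)
  have hbad : ∑ z ∈ univ.filter (fun z => ¬ pml Q z ≤ t), margY Q z ≤ δ :=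
    calc ∑ z ∈ univ.filter (fun z => ¬ pml Q z ≤ t), margY Q z
        ≤ ∑ z ∈ univ.filter (fun z => ¬ pml Q z ≤ t), δ / L * ⨆ x, condYX Q x z := by
          refine sum_le_sum fun z hz => ?_
          by_contra! hlt
          refine (mem_filter.1 hz).2 (pml_le_log_of_iSup_le hQ hc ?_)
          calc ⨆ x, condYX Q x z = L / δ * (δ / L * ⨆ x, condYX Q x z) := by
                field_simp
            _ ≤ L / δ * margY Q z := by gcongr
      _ ≤ ∑ z, δ / L * ⨆ x, condYX Q x z :=
          sum_le_sum_of_subset_of_nonneg (filter_subset _ _)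
            fun z _ _ => mul_nonneg (by positivity) (hsup_nonneg z)
      _ ≤ δ / L * L := by rw [← mul_sum]; gcongr
      _ = δ := div_mul_cancel₀ δ hL0.ne'
  refine ubarEps_le (Real.log_nonneg hc) ?_
  have hsplit := sum_filter_add_sum_filter_not univ (fun z => pml Q z ≤ t) (margY Q)
  linarith

end Quantile

section Envelope

variable {X Y : Type} [Fintype X] [Fintype Y] {P : X → Y → ℝ} {δ : ℝ}

lemma pmlEnvelope_le_log_div (hP : IsJoint P) {L : ℝ} (hδ : 0 < δ) (hδL : δ ≤ L)
    (hL : ∑ y, ⨆ x, condYX P x y ≤ L) : pmlEnvelope P δ ≤ Real.log (L / δ) := by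
  refine Real.sSup_le ?_ (Real.log_nonneg ((one_le_div hδ).2 hδL))
  rintro _ ⟨n, K, hK, rfl⟩
  exact ubarEps_le_log_div_of_sum_iSup_le (pushKernel_nonneg hP.1 hK)
    (by rw [sum_margY_pushKernel hK, hP.sum_margY]) hδ hδL
    ((sum_iSup_condYX_pushKernel_le hP.1 hK).trans hL)

lemma pmlEnvelope_le_log (hP : IsJoint P) {c : ℝ} (hδ : 0 ≤ δ) (hc : 1 ≤ c)
    (h : ∀ y, ⨆ x, condYX P x y ≤ c * margY P y) : pmlEnvelope P δ ≤ Real.log c := by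
  refine Real.sSup_le ?_ (Real.log_nonneg hc)
  rintro _ ⟨n, K, hK, rfl⟩
  exact ubarEps_le_of_forall_pml_le (by rw [sum_margY_pushKernel hK, hP.sum_margY]) hδ
    (Real.log_nonneg hc) fun z => pml_le_log_of_iSup_le (pushKernel_nonneg hP.1 hK) hc
      (iSup_condYX_pushKernel_le hP.1 hK (by linarith) h z)

end Envelope

section RandomizedResponse

variable {k : ℕ} {p : Fin k → ℝ} {α β : ℝ}

lemma krr_weights {εr : ℝ} (hk : 1 ≤ k) (hεr : 0 < εr)
    (hα : α = Real.exp εr / (Real.exp εr + k - 1)) (hβ : β = 1 / (Real.exp εr + k - 1)) :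
    0 < β ∧ β ≤ α ∧ α + (k - 1) * β = 1 := by
  have hexp : 1 < Real.exp εr := Real.one_lt_exp_iff.2 hεr
  have hk1 : (1 : ℝ) ≤ k := by exact_mod_cast hk
  have hden : 0 < Real.exp εr + k - 1 := by linarith
  refine ⟨by rw [hβ]; positivity, by rw [hα, hβ]; gcongr, ?_⟩
  rw [hα, hβ]
  field_simp
  ring

def krrJoint (p : Fin k → ℝ) (α β : ℝ) (i j : Fin k) : ℝ :=
  p i * (if j = i then α else β)

lemma sum_ite_eq_krr (i : Fin k) :
    ∑ j : Fin k, (if j = i then α else β) = α + (k - 1) * β := by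
  calc ∑ j : Fin k, (if j = i then α else β)
      = ∑ j : Fin k, (β + if j = i then α - β else 0) :=
        sum_congr rfl fun j _ => by split_ifs <;> ring
    _ = α + (k - 1) * β := by
        rw [sum_add_distrib, sum_ite_eq' univ i]
        simp only [sum_const, card_univ, Fintype.card_fin, nsmul_eq_mul, mem_univ, if_true]
        ring

lemma margX_krrJoint (hrow : α + (k - 1) * β = 1) (i : Fin k) :
    margX (krrJoint p α β) i = p i := by
  simp only [margX, krrJoint]
  rw [← mul_sum, sum_ite_eq_krr, hrow, mul_one]

lemma margY_krrJoint (hpsum : ∑ i, p i = 1) (j : Fin k) :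
    margY (krrJoint p α β) j = β + (α - β) * p j := by
  calc margY (krrJoint p α β) j
      = ∑ i, (β * p i + if j = i then (α - β) * p i else 0) :=
        sum_congr rfl fun i _ => by simp only [krrJoint]; split_ifs <;> ring
    _ = β + (α - β) * p j := by
        rw [sum_add_distrib, ← mul_sum, hpsum, sum_ite_eq univ j]
        simp only [mem_univ, if_true, mul_one]

lemma margY_krrJoint_pos (hp : ∀ i, 0 ≤ p i) (hpsum : ∑ i, p i = 1) (hβ : 0 < β)
    (hβα : β ≤ α) (j : Fin k) : 0 < margY (krrJoint p α β) j := by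
  rw [margY_krrJoint hpsum]
  exact add_pos_of_pos_of_nonneg hβ (mul_nonneg (sub_nonneg.2 hβα) (hp j))

lemma margY_krrJoint_le (hp : ∀ i, 0 ≤ p i) (hpsum : ∑ i, p i = 1) (hβα : β ≤ α)
    (j : Fin k) : margY (krrJoint p α β) j ≤ α := by
  have hpj : p j ≤ 1 := hpsum ▸ single_le_sum (fun i _ => hp i) (mem_univ j)
  rw [margY_krrJoint hpsum]
  nlinarith

lemma margY_krrJoint_monotone (hpsum : ∑ i, p i = 1) (hβα : β ≤ α) (hmono : Monotone p) :
    Monotone (margY (krrJoint p α β)) := fun i j hij => by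
  rw [margY_krrJoint hpsum, margY_krrJoint hpsum]
  exact add_le_add_right (mul_le_mul_of_nonneg_left (hmono hij) (sub_nonneg.2 hβα)) β

lemma condYX_krrJoint (hrow : α + (k - 1) * β = 1) {i : Fin k} (hi : p i ≠ 0) (j : Fin k) :
    condYX (krrJoint p α β) i j = if j = i then α else β := by
  rw [condYX, margX_krrJoint hrow, krrJoint, mul_div_cancel_left₀ _ hi]

lemma krrJoint_isJoint (hp : ∀ i, 0 ≤ p i) (hpsum : ∑ i, p i = 1) (hβ : 0 ≤ β)
    (hβα : β ≤ α) (hrow : α + (k - 1) * β = 1) : IsJoint (krrJoint p α β) := by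
  refine ⟨fun i j => mul_nonneg (hp i) (by split_ifs <;> linarith), ?_⟩
  simp only [← margX.eq_1, margX_krrJoint hrow, hpsum]

lemma iSup_condYX_krrJoint_le (hp : ∀ i, p i ≠ 0) (hβ : 0 ≤ β) (hβα : β ≤ α)
    (hrow : α + (k - 1) * β = 1) (j : Fin k) : ⨆ i, condYX (krrJoint p α β) i j ≤ α :=
  Real.iSup_le (fun i => by rw [condYX_krrJoint hrow (hp i)]; split_ifs <;> linarith)
    (hβ.trans hβα)

lemma sum_iSup_condYX_krrJoint_le (hp : ∀ i, p i ≠ 0) (hβ : 0 ≤ β) (hβα : β ≤ α)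
    (hrow : α + (k - 1) * β = 1) : ∑ j, ⨆ i, condYX (krrJoint p α β) i j ≤ k * α := by
  calc ∑ j, ⨆ i, condYX (krrJoint p α β) i j ≤ ∑ _j : Fin k, α :=
        sum_le_sum fun j _ => iSup_condYX_krrJoint_le hp hβ hβα hrow j
    _ = k * α := by simp

end RandomizedResponse

/-- For the `k`-randomized response mechanism with parameter `ε_r > 0`
and a prior `p₁ ≤ … ≤ p_k` with positive entries, where
`α = e^{ε_r}/(e^{ε_r}+k-1)`, `β = 1/(e^{ε_r}+k-1)`, `q_j = β + (α-β) p_j`,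
for every `δ ∈ (q₁, 1)` the PML envelope satisfies
`ε_c(δ) ≤ min {log (k α / δ), log (α / q₁)}`. -/
theorem pmlEnvelope_krr_upper_bound
    (k : ℕ) (hk : 2 ≤ k) (εr : ℝ) (hεr : 0 < εr)
    (p : Fin k → ℝ) (hp : ∀ i, 0 < p i) (hpsum : ∑ i, p i = 1) (hmono : Monotone p)
    (α β : ℝ)
    (hα : α = Real.exp εr / (Real.exp εr + k - 1))
    (hβ : β = 1 / (Real.exp εr + k - 1))
    (q : Fin k → ℝ) (hq : ∀ j, q j = β + (α - β) * p j)
    (δ : ℝ) (hδl : q ⟨0, by omega⟩ < δ) (hδu : δ < 1) :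
    pmlEnvelope (fun i j : Fin k => p i * (if j = i then α else β)) δ
      ≤ min (Real.log (k * α / δ)) (Real.log (α / q ⟨0, by omega⟩)) := by
  obtain ⟨hβ0, hβα, hrow⟩ := krr_weights (by omega) hεr hα hβ
  have hp0 (i : Fin k) : 0 ≤ p i := (hp i).le
  have hP := krrJoint_isJoint hp0 hpsum hβ0.le hβα hrow
  set i₀ : Fin k := ⟨0, by omega⟩
  set m := margY (krrJoint p α β)
  have hqm (j : Fin k) : q j = m j := (hq j).trans (margY_krrJoint hpsum j).symm
  rw [hqm] at hδl ⊢
  have hm₀ : 0 < m i₀ := margY_krrJoint_pos hp0 hpsum hβ0 hβα i₀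
  have hδ : 0 < δ := hm₀.trans hδl
  have hδkα : δ ≤ k * α := by
    have hk1 : (1 : ℝ) ≤ k := by exact_mod_cast (by omega : 1 ≤ k)
    nlinarith [mul_le_mul_of_nonneg_left hβα (sub_nonneg.2 hk1)]
  change pmlEnvelope (krrJoint p α β) δ ≤ _
  refine le_min (pmlEnvelope_le_log_div hP hδ hδkα
      (sum_iSup_condYX_krrJoint_le (fun i => (hp i).ne') hβ0.le hβα hrow))
    (pmlEnvelope_le_log hP hδ.le ((one_le_div hm₀).2 (margY_krrJoint_le hp0 hpsum hβα i₀))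
      fun j => ?_)
  calc ⨆ i, condYX (krrJoint p α β) i j ≤ α :=
        iSup_condYX_krrJoint_le (fun i => (hp i).ne') hβ0.le hβα hrow j
    _ ≤ α / m i₀ * m j := by
        rw [div_mul_eq_mul_div, le_div_iff₀ hm₀]
        exact mul_le_mul_of_nonneg_left
          (margY_krrJoint_monotone hpsum hβα hmono (Nat.zero_le j.val)) (by linarith)
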